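/- arXiv:2401.00221 — 7 statements merged into one kernel-verified Lean document; each statement's English description precedes it below -/
import Mathlib

section
/- Let R be a finite set of rooms with capacities c_r ∈ {1, c} for some fixed c ∈ ℕ, and let R₁ = |{r ∈ R : c_r = 1}|. If R₁ ≥ c − 1, then for all F, M ∈ ℕ there exists a subset S ⊆ R with Σ_{r∈S} c_r ≥ F and Σ_{r∈R\S} c_r ≥ M if and only if F + M ≤ Σ_{r∈R} c_r. -/
/-- Single-period feasibility: female and male patients occupy disjoint sets of rooms. -/
def Feasible {ι : Type*} [DecidableEq ι] (R : Finset ι) (c : ι → ℕ) (F M : ℕ) : Prop :=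
  ∃ S ⊆ R, F ≤ ∑ r ∈ S, c r ∧ M ≤ ∑ r ∈ R \ S, c r

theorem single_and_c_rooms_feasibility {ι : Type*} [DecidableEq ι]
    (R : Finset ι) (cap : ι → ℕ) (c : ℕ)
    (hcap : ∀ r ∈ R, cap r = 1 ∨ cap r = c)
    (hR1 : c - 1 ≤ (R.filter fun r => cap r = 1).card) :
    ∀ F M : ℕ, Feasible R cap F M ↔ F + M ≤ ∑ r ∈ R, cap r := by
  intro F M
  constructor
  · rintro ⟨S, hS, hF, hM⟩
    calc F + M ≤ (∑ r ∈ S, cap r) + ∑ r ∈ R \ S, cap r := Nat.add_le_add hF hM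
    _ = ∑ r ∈ R, cap r := by rw [add_comm]; exact Finset.sum_sdiff hS
  · intro h
    set R1 := R.filter (fun r => cap r = 1) with hR1def
    set Rc := R.filter (fun r => cap r ≠ 1) with hRcdef
    have hdisj : Disjoint Rc R1 := by
      apply Finset.disjoint_left.mpr
      intro x hx hx1
      exact (Finset.mem_filter.mp hx).2 (Finset.mem_filter.mp hx1).2
    set k := Rc.card with hk
    set m := R1.card with hm
    have hsum1 : ∑ r ∈ R1, cap r = m := by
      rw [hm]
      rw [Finset.sum_congr rfl (fun r hr => (Finset.mem_filter.mp hr).2)]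
      simp; rfl
    have hsumc : ∑ r ∈ Rc, cap r = k * c := by
      rw [hk]
      rw [Finset.sum_congr rfl (fun r hr => by
        rcases hcap r (Finset.mem_filter.mp hr).1 with h1 | hc
        · exact absurd h1 (Finset.mem_filter.mp hr).2
        · exact hc)]
      simp [mul_comm]
    have hunion : Rc ∪ R1 = R := by
      rw [hRcdef, hR1def, Finset.union_comm, Finset.filter_union_filter_not_eq]
    have htot : ∑ r ∈ R, cap r = k * c + m := by
      rw [← hunion, Finset.sum_union hdisj, hsumc, hsum1]
    -- choose a ≤ k, b ≤ m with a*c + b = F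
    have hF' : F ≤ k * c + m := le_trans (Nat.le_add_right F M) (htot ▸ h)
    obtain ⟨a, b, ha, hb, hab⟩ : ∃ a b, a ≤ k ∧ b ≤ m ∧ a * c + b = F := by
      by_cases hdiv : F / c ≤ k
      · refine ⟨F / c, F % c, hdiv, ?_, by rw [mul_comm]; exact Nat.div_add_mod F c⟩
        rcases Nat.eq_zero_or_pos c with rfl | hc
        · simpa using hF'
        · calc F % c ≤ c - 1 := Nat.le_sub_one_of_lt (Nat.mod_lt _ hc)
          _ ≤ m := hR1
      · push_neg at hdiv
        refine ⟨k, F - k * c, le_refl k, ?_, ?_⟩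
        · omega
        · have hc : 0 < c := Nat.pos_of_ne_zero (by rintro rfl; simp at hdiv)
          have := (Nat.le_div_iff_mul_le hc).mp (Nat.succ_le_of_lt hdiv)
          rw [Nat.succ_mul] at this
          omega
    obtain ⟨A, hA, hAcard⟩ := Finset.exists_subset_card_eq ha
    obtain ⟨B, hB, hBcard⟩ := Finset.exists_subset_card_eq hb
    have hABdisj : Disjoint A B := hdisj.mono hA hB
    refine ⟨A ∪ B, ?_, ?_, ?_⟩
    · rw [← hunion]; exact Finset.union_subset_union hA hB
    · have hsumA : ∑ r ∈ A, cap r = a * c := by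
        rw [← hAcard]
        rw [Finset.sum_congr rfl (fun r hr => by
          have hr' := hA hr
          rcases hcap r (Finset.mem_filter.mp hr').1 with h1 | hc
          · exact absurd h1 (Finset.mem_filter.mp hr').2
          · exact hc)]
        simp [mul_comm]
      have hsumB : ∑ r ∈ B, cap r = b := by
        rw [← hBcard]
        rw [Finset.sum_congr rfl (fun r hr => (Finset.mem_filter.mp (hB hr)).2)]
        simp
      rw [Finset.sum_union hABdisj, hsumA, hsumB, hab]
    · have hsub : A ∪ B ⊆ R := by rw [← hunion]; exact Finset.union_subset_union hA hB
      have := Finset.sum_sdiff (f := cap) hsub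
      have hsumS : ∑ r ∈ A ∪ B, cap r = F := by
        have hsumA : ∑ r ∈ A, cap r = a * c := by
          rw [← hAcard]
          rw [Finset.sum_congr rfl (fun r hr => by
            have hr' := hA hr
            rcases hcap r (Finset.mem_filter.mp hr').1 with h1 | hc
            · exact absurd h1 (Finset.mem_filter.mp hr').2
            · exact hc)]
          simp [mul_comm]
        have hsumB : ∑ r ∈ B, cap r = b := by
          rw [← hBcard]
          rw [Finset.sum_congr rfl (fun r hr => (Finset.mem_filter.mp (hB hr)).2)]
          simp
        rw [Finset.sum_union hABdisj, hsumA, hsumB, hab]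
      omega
end

section
/- Let R be a finite set of rooms with capacities c_r ∈ {2, 2c} for a fixed c ≥ 2, and let R₂ = |{r ∈ R : c_r = 2}|. If R₂ ≥ c − 1, then for all F, M ∈ ℕ there exists S ⊆ R with Σ_{r∈S} c_r ≥ F and Σ_{r∈R\S} c_r ≥ M if and only if (F and M are both even and F + M ≤ Σ_{r∈R} c_r) or (F + M < Σ_{r∈R} c_r). -/
theorem double_and_2c_rooms_feasibility {ι : Type*} [DecidableEq ι]
    (R : Finset ι) (cap : ι → ℕ) (c : ℕ) (hc : 2 ≤ c)
    (hcap : ∀ r ∈ R, cap r = 2 ∨ cap r = 2 * c)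
    (hR2 : c - 1 ≤ (R.filter fun r => cap r = 2).card) :
    ∀ F M : ℕ, Feasible R cap F M ↔
      (Even F ∧ Even M ∧ F + M ≤ ∑ r ∈ R, cap r) ∨ F + M < ∑ r ∈ R, cap r := by
  classical
  set P := R.filter (fun r => cap r = 2) with hP
  set Q := R.filter (fun r => ¬ cap r = 2) with hQ
  have hPcap : ∀ r ∈ P, cap r = 2 := fun r hr => (Finset.mem_filter.mp hr).2
  have hQcap : ∀ r ∈ Q, cap r = 2 * c := by
    intro r hr
    rw [hQ, Finset.mem_filter] at hr
    rcases hcap r hr.1 with h | h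
    · exact absurd h hr.2
    · exact h
  have hPQ : P ∪ Q = R := Finset.filter_union_filter_not_eq _ R
  have hdisj : Disjoint P Q := Finset.disjoint_filter_filter_not R R _
  have hT : ∑ r ∈ R, cap r = 2 * P.card + 2 * c * Q.card := by
    rw [← hPQ, Finset.sum_union hdisj, Finset.sum_congr rfl hPcap,
      Finset.sum_congr rfl hQcap]
    simp [Finset.sum_const, smul_eq_mul, mul_comm]
  have key : ∀ k, 2 * k ≤ ∑ r ∈ R, cap r → ∃ S ⊆ R, ∑ r ∈ S, cap r = 2 * k := by
    intro k hk
    rw [hT] at hk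
    by_cases hcase : k ≤ P.card
    · obtain ⟨t, ht, htc⟩ := Finset.exists_subset_card_eq hcase
      refine ⟨t, ht.trans (Finset.filter_subset _ _), ?_⟩
      rw [Finset.sum_congr rfl (fun r hr => hPcap r (ht hr))]
      simp [Finset.sum_const, smul_eq_mul, htc, mul_comm]
    · push_neg at hcase
      have hkle : k ≤ P.card + c * Q.card := by nlinarith
      set b := min (k / c) Q.card with hb
      set a := k - c * b with ha
      have hcb : c * b ≤ k := by
        calc c * b ≤ c * (k / c) := Nat.mul_le_mul_left c (min_le_left _ _)
        _ ≤ k := by rw [mul_comm]; exact Nat.div_mul_le_self k c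
      have haP : a ≤ P.card := by
        by_cases hq : k / c ≤ Q.card
        · have hbeq : c * b = c * (k / c) := by rw [hb, min_eq_left hq]
          have hmod : k % c + c * (k / c) = k := Nat.mod_add_div k c
          have hlt : k % c < c := Nat.mod_lt _ (by omega)
          omega
        · have hbeq : c * b = c * Q.card := by rw [hb, min_eq_right (le_of_not_ge hq)]
          omega
      obtain ⟨t, ht, htc⟩ := Finset.exists_subset_card_eq haP
      obtain ⟨u, hu, huc⟩ := Finset.exists_subset_card_eq (s := Q) (n := b) (min_le_right _ _)
      have hd : Disjoint t u := hdisj.mono ht hu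
      refine ⟨t ∪ u, Finset.union_subset (ht.trans (Finset.filter_subset _ _))
        (hu.trans (Finset.filter_subset _ _)), ?_⟩
      rw [Finset.sum_union hd, Finset.sum_congr rfl (fun r hr => hPcap r (ht hr)),
        Finset.sum_congr rfl (fun r hr => hQcap r (hu hr))]
      simp only [Finset.sum_const, smul_eq_mul, htc, huc]
      have : a + c * b = k := by omega
      nlinarith
  intro F M
  constructor
  · rintro ⟨S, hS, hF, hM⟩
    have hsum : ∑ r ∈ R \ S, cap r + ∑ r ∈ S, cap r = ∑ r ∈ R, cap r :=
      Finset.sum_sdiff hS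
    have hevenS : 2 ∣ ∑ r ∈ S, cap r :=
      Finset.dvd_sum (fun r hr => by rcases hcap r (hS hr) with h | h <;> omega)
    have hevenD : 2 ∣ ∑ r ∈ R \ S, cap r :=
      Finset.dvd_sum (fun r hr => by
        rcases hcap r (Finset.sdiff_subset hr) with h | h <;> omega)
    simp only [Nat.even_iff]
    omega
  · rintro (⟨hF, hM, hFM⟩ | hFM)
    · obtain ⟨f, hf⟩ := hF
      obtain ⟨S, hS, hsum⟩ := key f (by omega)
      refine ⟨S, hS, by omega, ?_⟩
      have := Finset.sum_sdiff hS (f := cap)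
      omega
    · obtain ⟨k, hk1, hk2⟩ : ∃ k, F ≤ 2 * k ∧ 2 * k + M ≤ ∑ r ∈ R, cap r :=
        ⟨(F + 1) / 2, by omega⟩
      obtain ⟨S, hS, hsum⟩ := key k (by omega)
      refine ⟨S, hS, by omega, ?_⟩
      have := Finset.sum_sdiff hS (f := cap)
      omega
end

section
/- Let c_r ∈ {2, 2c} for all r ∈ R with c ≥ 2 and R₂ ≥ c − 1 rooms of capacity 2. If F + M < Σ_{r∈R} c_r and at least one of F, M is odd, then the instance (F, M, R) is feasible, i.e., there exists S ⊆ R with Σ_{r∈S} c_r ≥ F and Σ_{r∈R\S} c_r ≥ M. -/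
open Finset

theorem Nat.exists_add_mul_eq_of_le {c J K m : ℕ} (hJ : c - 1 ≤ J) (hm : m ≤ J + c * K) :
    ∃ j ≤ J, ∃ k ≤ K, j + c * k = m := by
  induction K generalizing m with
  | zero => exact ⟨m, by simpa using hm, 0, le_rfl, by simp⟩
  | succ K ih =>
    rw [Nat.mul_succ] at hm
    by_cases hmK : m ≤ J + c * K
    · obtain ⟨j, hj, k, hk, rfl⟩ := ih hmK
      exact ⟨j, hj, k, hk.trans K.le_succ, rfl⟩
    · obtain ⟨j, hj, k, hk, hjk⟩ := ih (m := m - c) (by omega)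
      refine ⟨j, hj, k + 1, Nat.succ_le_succ hk, ?_⟩
      rw [Nat.mul_succ]
      omega

section Rooms

variable {ι : Type*}

theorem feasible_of_subset_sum [DecidableEq ι] {R S : Finset ι} {cap : ι → ℕ} {F M : ℕ}
    (hSR : S ⊆ R) (hF : F ≤ ∑ r ∈ S, cap r)
    (hM : ∑ r ∈ S, cap r + M ≤ ∑ r ∈ R, cap r) :
    Feasible R cap F M :=
  ⟨S, hSR, hF, by rw [← sum_sdiff hSR] at hM; omega⟩

theorem exists_subset_sum_eq_mul_of_const {A : Finset ι} {cap : ι → ℕ} {a n : ℕ}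
    (hA : ∀ r ∈ A, cap r = a) (hn : n ≤ #A) : ∃ S ⊆ A, ∑ r ∈ S, cap r = n * a := by
  obtain ⟨S, hSA, rfl⟩ := exists_subset_card_eq hn
  exact ⟨S, hSA, sum_const_nat fun r hr => hA r (hSA hr)⟩

variable {R : Finset ι} {cap : ι → ℕ} {c : ℕ}

theorem cap_eq_two_mul_of_mem_filter_ne (hcap : ∀ r ∈ R, cap r = 2 ∨ cap r = 2 * c) {r : ι}
    (hr : r ∈ R.filter fun r => ¬cap r = 2) : cap r = 2 * c :=
  (hcap r (mem_filter.mp hr).1).resolve_left (mem_filter.mp hr).2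

theorem sum_eq_of_cap_two_or (hcap : ∀ r ∈ R, cap r = 2 ∨ cap r = 2 * c) :
    ∑ r ∈ R, cap r =
      2 * (#(R.filter fun r => cap r = 2) + c * #(R.filter fun r => ¬cap r = 2)) := by
  rw [← sum_filter_add_sum_filter_not R (fun r => cap r = 2) cap,
    sum_const_nat (m := 2) fun r hr => (mem_filter.mp hr).2,
    sum_const_nat (m := 2 * c) fun r => cap_eq_two_mul_of_mem_filter_ne hcap]
  ring

theorem exists_subset_sum_eq_of_cap_two_or [DecidableEq ι]
    (hcap : ∀ r ∈ R, cap r = 2 ∨ cap r = 2 * c) {j k : ℕ}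
    (hj : j ≤ #(R.filter fun r => cap r = 2))
    (hk : k ≤ #(R.filter fun r => ¬cap r = 2)) :
    ∃ S ⊆ R, ∑ r ∈ S, cap r = 2 * (j + c * k) := by
  obtain ⟨Ss, hSs, hsum_s⟩ :=
    exists_subset_sum_eq_mul_of_const (fun r hr => (mem_filter.mp hr).2) hj
  obtain ⟨Sb, hSb, hsum_b⟩ :=
    exists_subset_sum_eq_mul_of_const (fun r => cap_eq_two_mul_of_mem_filter_ne hcap) hk
  have hdisj : Disjoint Ss Sb :=
    disjoint_filter_filter_not R R (fun r => cap r = 2) |>.mono hSs hSb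
  refine ⟨Ss ∪ Sb, union_subset (hSs.trans (filter_subset _ _))
    (hSb.trans (filter_subset _ _)), ?_⟩
  rw [sum_union hdisj, hsum_s, hsum_b]
  ring

end Rooms

theorem strict_capacity_odd_feasible_general {ι : Type*} [DecidableEq ι]
    (R : Finset ι) (cap : ι → ℕ) (c : ℕ)
    (hcap : ∀ r ∈ R, cap r = 2 ∨ cap r = 2 * c)
    (hR2 : c - 1 ≤ (R.filter fun r => cap r = 2).card)
    (F M : ℕ) (hlt : F + M < ∑ r ∈ R, cap r) :
    Feasible R cap F M := by
  have htotal := sum_eq_of_cap_two_or hcap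
  obtain ⟨j, hj, k, hk, hjk⟩ :=
    Nat.exists_add_mul_eq_of_le (m := (F + 1) / 2)
      (K := #(R.filter fun r => ¬cap r = 2)) hR2 (by omega)
  obtain ⟨S, hSR, hS⟩ := exists_subset_sum_eq_of_cap_two_or hcap hj hk
  exact feasible_of_subset_sum hSR (by omega) (by omega)

theorem strict_capacity_odd_feasible {ι : Type*} [DecidableEq ι]
    (R : Finset ι) (cap : ι → ℕ) (c : ℕ) (hc : 2 ≤ c)
    (hcap : ∀ r ∈ R, cap r = 2 ∨ cap r = 2 * c)
    (hR2 : c - 1 ≤ (R.filter fun r => cap r = 2).card)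
    (F M : ℕ) (hlt : F + M < ∑ r ∈ R, cap r) (hodd : Odd F ∨ Odd M) :
    Feasible R cap F M :=
  strict_capacity_odd_feasible_general R cap c hcap hR2 F M hlt
end

section
/- Consider a ward with only double rooms (c_r = 2 for all r ∈ |R| rooms), F female patients of which F* are private, M male patients of which M* are private, with F* ≤ F, M* ≤ M, and assume feasibility ⌈F/2⌉ + ⌈M/2⌉ ≤ |R|. Define α = |R| − ⌈(F−F*)/2⌉ − ⌈(M−M*)/2⌉, βf = min((F−F*) mod 2, F*), βm = min((M−M*) mod 2, M*). Then the maximum number s of private patients that can be alone in a room equals: F*+M* if α ≥ F*+M*; F*+M*−1 if α = F*+M*−1 and βf = βm = 1; and 2α + βf + βm − (F*+M*) otherwise. -/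
/-!
Only the sizes of the four room sets matter, and `b` private patients of one gender alone in a
room force `⌈(X + b) / 2⌉` rooms for the `X` patients of that gender; so the problem is to
maximise `b + d` subject to `⌈(F + b) / 2⌉ + ⌈(M + d) / 2⌉ ≤ |R|`.

Pairing everybody takes `⌈F / 2⌉ + ⌈M / 2⌉` rooms. For each gender the odd patient out, if any,
can be a private one alone for free; every further room splits a pair of private patients,
gaining two; and a last private patient sharing with a non-private one gains only one per room.
Spending the `k` spare rooms on pairs gives `2 k` plus the free ones, unless all private patients
get a room; the exceptional case is a single spare room left when both genders still have such a
last private patient.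
-/

/-- An achievable value of the Private Patient Problem with only double rooms:
`s` private patients can be alone in a room. -/
def PPPAchievable {ι : Type*} (R : Finset ι) (F Fs M Ms s : ℕ) : Prop :=
  ∃ SF SFs SM SMs : Finset ι,
    SF ⊆ R ∧ SFs ⊆ R ∧ SM ⊆ R ∧ SMs ⊆ R ∧
    Disjoint SF SFs ∧ Disjoint SF SM ∧ Disjoint SF SMs ∧
    Disjoint SFs SM ∧ Disjoint SFs SMs ∧ Disjoint SM SMs ∧
    F ≤ 2 * SF.card + SFs.card ∧ SFs.card ≤ Fs ∧
    M ≤ 2 * SM.card + SMs.card ∧ SMs.card ≤ Ms ∧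
    s = SFs.card + SMs.card

/-- Rooms for `X` patients of one gender of whom `b ≤ X` are alone (meaningless for `b > X`). -/
def roomsNeeded (X b : ℕ) : ℕ := (X + b + 1) / 2

theorem Finset.exists_disjoint_subset_card_eq {ι : Type*} [DecidableEq ι] {R U : Finset ι} {a : ℕ}
    (hU : U ⊆ R) (h : U.card + a ≤ R.card) : ∃ S ⊆ R, Disjoint U S ∧ S.card = a := by
  obtain ⟨S, hS, rfl⟩ := Finset.exists_subset_card_eq
    (show a ≤ (R \ U).card by rw [Finset.card_sdiff_of_subset hU]; omega)
  exact ⟨S, hS.trans Finset.sdiff_subset, Finset.disjoint_sdiff.mono_right hS, rfl⟩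

theorem pppAchievable_iff {ι : Type*} {R : Finset ι} {F Fs M Ms s : ℕ} (hF : Fs ≤ F)
    (hM : Ms ≤ M) :
    PPPAchievable R F Fs M Ms s ↔
      ∃ b ≤ Fs, ∃ d ≤ Ms, s = b + d ∧ roomsNeeded F b + roomsNeeded M d ≤ R.card := by
  classical
  unfold roomsNeeded
  constructor
  · rintro ⟨SF, SFs, SM, SMs, hSF, hSFs, hSM, hSMs, h₁, h₂, h₃, h₄, h₅, h₆,
      hFcap, hFs, hMcap, hMs, rfl⟩
    have hcard : (SF ∪ SFs ∪ SM ∪ SMs).card = SF.card + SFs.card + SM.card + SMs.card := by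
      rw [Finset.card_union_of_disjoint (by simp only [Finset.disjoint_union_left]; tauto),
        Finset.card_union_of_disjoint (by simp only [Finset.disjoint_union_left]; tauto),
        Finset.card_union_of_disjoint h₁]
    have hsub : SF ∪ SFs ∪ SM ∪ SMs ⊆ R :=
      Finset.union_subset (Finset.union_subset (Finset.union_subset hSF hSFs) hSM) hSMs
    have := Finset.card_le_card hsub
    exact ⟨SFs.card, hFs, SMs.card, hMs, rfl, by omega⟩
  · rintro ⟨b, hb, d, hd, rfl, hrooms⟩
    obtain ⟨SF, hSF, -, hSFcard⟩ := Finset.exists_disjoint_subset_card_eq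
      (a := (F + b + 1) / 2 - b) (Finset.empty_subset R) (by simp only [Finset.card_empty]; omega)
    obtain ⟨SFs, hSFs, hSFsdisj, hSFscard⟩ := Finset.exists_disjoint_subset_card_eq
      (a := b) hSF (by omega)
    obtain ⟨SM, hSM, hSMdisj, hSMcard⟩ := Finset.exists_disjoint_subset_card_eq
      (a := (M + d + 1) / 2 - d) (Finset.union_subset hSF hSFs)
      (by rw [Finset.card_union_of_disjoint hSFsdisj]; omega)
    obtain ⟨SMs, hSMs, hSMsdisj, hSMscard⟩ := Finset.exists_disjoint_subset_card_eq
      (a := d) (Finset.union_subset (Finset.union_subset hSF hSFs) hSM)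
      (by rw [Finset.card_union_of_disjoint hSMdisj, Finset.card_union_of_disjoint hSFsdisj]; omega)
    simp only [Finset.disjoint_union_left] at hSMdisj hSMsdisj
    exact ⟨SF, SFs, SM, SMs, hSF, hSFs, hSM, hSMs, hSFsdisj, hSMdisj.1, hSMsdisj.1.1, hSMdisj.2,
      hSMsdisj.1.2, hSMsdisj.2, by omega, by omega, by omega, by omega, by omega⟩

section OneGender

variable (X Xs : ℕ)

/-- A private patient can be the odd one out when all `X` patients are paired. -/
def oddRoomAlone : ℕ := min (X % 2) Xs

def privatePairs : ℕ := (Xs - oddRoomAlone X Xs) / 2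

/-- The paper's `β`: a private patient fills the free bed left by pairing the non-private ones. -/
def oddRoomFiller : ℕ := min ((X - Xs) % 2) Xs

variable {X Xs}

theorem oddRoomFiller_le_one : oddRoomFiller X Xs ≤ 1 := by
  unfold oddRoomFiller; omega

theorem oddRoomAlone_add_two_mul_privatePairs_add_oddRoomFiller (h : Xs ≤ X) :
    oddRoomAlone X Xs + 2 * privatePairs X Xs + oddRoomFiller X Xs = Xs := by
  unfold privatePairs oddRoomAlone oddRoomFiller; omega

theorem div_two_add_oddRoomAlone_add_privatePairs (h : Xs ≤ X) :
    (X - Xs + 1) / 2 + oddRoomAlone X Xs + privatePairs X Xs = (X + 1) / 2 := by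
  unfold privatePairs oddRoomAlone; omega

theorem roomsNeeded_oddRoomAlone_add_two_mul (e : ℕ) :
    roomsNeeded X (oddRoomAlone X Xs + 2 * e) = (X + 1) / 2 + e := by
  unfold roomsNeeded oddRoomAlone; omega

theorem roomsNeeded_self (h : Xs ≤ X) :
    roomsNeeded X Xs = (X + 1) / 2 + privatePairs X Xs + oddRoomFiller X Xs := by
  have h₁ := oddRoomAlone_add_two_mul_privatePairs_add_oddRoomFiller h
  have h₂ := div_two_add_oddRoomAlone_add_privatePairs h
  unfold roomsNeeded; omega

theorem two_mul_div_two_add_le_two_mul_roomsNeeded {b : ℕ} (hb : b ≤ Xs) :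
    2 * ((X + 1) / 2) + b ≤ 2 * roomsNeeded X b + oddRoomAlone X Xs := by
  unfold roomsNeeded oddRoomAlone; omega

end OneGender

def maxAlone (n F Fs M Ms : ℕ) : ℕ :=
  let α := n - (F - Fs + 1) / 2 - (M - Ms + 1) / 2
  let βf := oddRoomFiller F Fs
  let βm := oddRoomFiller M Ms
  if Fs + Ms ≤ α then Fs + Ms
  else if α = Fs + Ms - 1 ∧ βf = 1 ∧ βm = 1 then Fs + Ms - 1
  else 2 * α + βf + βm - (Fs + Ms)

theorem le_maxAlone {n F Fs M Ms b d : ℕ} (hF : Fs ≤ F) (hM : Ms ≤ M) (hb : b ≤ Fs)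
    (hd : d ≤ Ms) (h : roomsNeeded F b + roomsNeeded M d ≤ n) : b + d ≤ maxAlone n F Fs M Ms := by
  have hFs := oddRoomAlone_add_two_mul_privatePairs_add_oddRoomFiller hF
  have hMs := oddRoomAlone_add_two_mul_privatePairs_add_oddRoomFiller hM
  have hFA := div_two_add_oddRoomAlone_add_privatePairs hF
  have hMA := div_two_add_oddRoomAlone_add_privatePairs hM
  have hFb := two_mul_div_two_add_le_two_mul_roomsNeeded (X := F) hb
  have hMd := two_mul_div_two_add_le_two_mul_roomsNeeded (X := M) hd
  unfold maxAlone; dsimp only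
  split_ifs with hall hone
  · omega
  · by_contra hlt
    obtain rfl : b = Fs := by omega
    obtain rfl : d = Ms := by omega
    have := roomsNeeded_self hF
    have := roomsNeeded_self hM
    omega
  · omega

theorem exists_eq_maxAlone {n F Fs M Ms : ℕ} (hF : Fs ≤ F) (hM : Ms ≤ M)
    (hfeas : (F + 1) / 2 + (M + 1) / 2 ≤ n) :
    ∃ b ≤ Fs, ∃ d ≤ Ms, maxAlone n F Fs M Ms = b + d ∧ roomsNeeded F b + roomsNeeded M d ≤ n := by
  have hFs := oddRoomAlone_add_two_mul_privatePairs_add_oddRoomFiller hF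
  have hMs := oddRoomAlone_add_two_mul_privatePairs_add_oddRoomFiller hM
  have hFA := div_two_add_oddRoomAlone_add_privatePairs hF
  have hMA := div_two_add_oddRoomAlone_add_privatePairs hM
  have hβf := oddRoomFiller_le_one (X := F) (Xs := Fs)
  have hβm := oddRoomFiller_le_one (X := M) (Xs := Ms)
  unfold maxAlone; dsimp only
  split_ifs with hall hone
  · have := roomsNeeded_self hF
    have := roomsNeeded_self hM
    exact ⟨Fs, le_rfl, Ms, le_rfl, rfl, by omega⟩
  · have := roomsNeeded_self hF
    have := roomsNeeded_oddRoomAlone_add_two_mul (X := M) (Xs := Ms) (privatePairs M Ms)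
    refine ⟨Fs, le_rfl, oddRoomAlone M Ms + 2 * privatePairs M Ms, by omega, by omega, by omega⟩
  · set k := n - (F + 1) / 2 - (M + 1) / 2
    have hk : k ≤ privatePairs F Fs + privatePairs M Ms := by omega
    -- the `k` spare rooms split pairs of private patients, female ones first
    set x := min k (privatePairs F Fs)
    have hbF := roomsNeeded_oddRoomAlone_add_two_mul (X := F) (Xs := Fs) x
    have hbM := roomsNeeded_oddRoomAlone_add_two_mul (X := M) (Xs := Ms) (k - x)
    refine ⟨oddRoomAlone F Fs + 2 * x, by omega, oddRoomAlone M Ms + 2 * (k - x), by omega,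
      by omega, by omega⟩

theorem ppp_double_rooms_formula {ι : Type*} (R : Finset ι) (F Fs M Ms : ℕ)
    (hF : Fs ≤ F) (hM : Ms ≤ M)
    (hfeas : (F + 1) / 2 + (M + 1) / 2 ≤ R.card) :
    IsGreatest {s | PPPAchievable R F Fs M Ms s}
      (let α := R.card - (F - Fs + 1) / 2 - (M - Ms + 1) / 2
       let βf := min ((F - Fs) % 2) Fs
       let βm := min ((M - Ms) % 2) Ms
       if Fs + Ms ≤ α then Fs + Ms
       else if α = Fs + Ms - 1 ∧ βf = 1 ∧ βm = 1 then Fs + Ms - 1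
       else 2 * α + βf + βm - (Fs + Ms)) := by
  refine ⟨(pppAchievable_iff hF hM).2 (exists_eq_maxAlone hF hM hfeas), ?_⟩
  rintro s hs
  obtain ⟨b, hb, d, hd, rfl, hrooms⟩ := (pppAchievable_iff hF hM).1 hs
  exact le_maxAlone hF hM hb hd hrooms
end

section
/- In the Private Patient Problem with only double rooms (capacities all equal to 2), if α := |R| − ⌈(F−F*)/2⌉ − ⌈(M−M*)/2⌉ ≥ F* + M*, then s^max = F* + M*, i.e., every private patient can be assigned their own room. -/
theorem ppp_all_private_single {ι : Type*} (R : Finset ι) (F Fs M Ms : ℕ)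
    (hF : Fs ≤ F) (hM : Ms ≤ M)
    (hfeas : (F + 1) / 2 + (M + 1) / 2 ≤ R.card)
    (hα : Fs + Ms ≤ R.card - (F - Fs + 1) / 2 - (M - Ms + 1) / 2) :
    IsGreatest {s | PPPAchievable R F Fs M Ms s} (Fs + Ms) := by
  classical
  constructor
  · set a := (F - Fs + 1) / 2 with ha
    set b := (M - Ms + 1) / 2 with hb
    have htot : Fs + Ms + a + b ≤ R.card := by omega
    obtain ⟨SFs, hSFs, hcFs⟩ := Finset.exists_subset_card_eq (s := R) (n := Fs) (by omega)
    obtain ⟨SMs, hSMs, hcMs⟩ := Finset.exists_subset_card_eq (s := R \ SFs) (n := Ms) (by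
      rw [Finset.card_sdiff_of_subset hSFs]; omega)
    obtain ⟨SF, hSF, hcF⟩ := Finset.exists_subset_card_eq (s := (R \ SFs) \ SMs) (n := a) (by
      rw [Finset.card_sdiff_of_subset hSMs, Finset.card_sdiff_of_subset hSFs]; omega)
    obtain ⟨SM, hSM, hcM⟩ := Finset.exists_subset_card_eq (s := (((R \ SFs) \ SMs) \ SF)) (n := b) (by
      rw [Finset.card_sdiff_of_subset hSF, Finset.card_sdiff_of_subset hSMs, Finset.card_sdiff_of_subset hSFs]; omega)
    have hSMs' : SMs ⊆ R := hSMs.trans (Finset.sdiff_subset)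
    have hSF' : SF ⊆ R := hSF.trans ((Finset.sdiff_subset).trans Finset.sdiff_subset)
    have hSM' : SM ⊆ R :=
      hSM.trans ((Finset.sdiff_subset).trans ((Finset.sdiff_subset).trans Finset.sdiff_subset))
    refine ⟨SF, SFs, SM, SMs, hSF', hSFs, hSM', hSMs',
      Finset.sdiff_disjoint.mono_left (hSF.trans Finset.sdiff_subset),
      (Finset.sdiff_disjoint.mono_left hSM).symm,
      Finset.sdiff_disjoint.mono_left hSF,
      (Finset.sdiff_disjoint.mono_left
        (hSM.trans (Finset.sdiff_subset.trans Finset.sdiff_subset))).symm,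
      (Finset.sdiff_disjoint.mono_left hSMs).symm,
      Finset.sdiff_disjoint.mono_left (hSM.trans Finset.sdiff_subset),
      ?_, ?_, ?_, ?_, ?_⟩
    · rw [hcF, hcFs]; omega
    · omega
    · rw [hcM, hcMs]; omega
    · omega
    · omega
  · rintro s ⟨SF, SFs, SM, SMs, -, -, -, -, -, -, -, -, -, -, -, h1, -, h2, h3⟩
    omega
end

section
/- In the Private Patient Problem with only double rooms, for any valid assignment the number of private patients alone in a room satisfies |S_F*| + |S_M*| ≤ 2α + βf + βm − (F* + M*) whenever α < F* + M*, where α = |R| − ⌈(F−F*)/2⌉ − ⌈(M−M*)/2⌉, βf = min((F−F*) mod 2, F*), βm = min((M−M*) mod 2, M*). (That is, the stated quantity is an upper bound on the objective in this regime.) -/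
/-!
Count twice the rooms used by each sex: a sex with `n` patients, `p` of them private, of whom `b`
are alone, occupies `a + b` rooms with `n ≤ 2a + b`, so `2(a + b) ≥ n + b`, which is at least
`b + p + 2⌈(n - p)/2⌉` up to the parity correction `min ((n - p) % 2) p`. Summing over both sexes
and using that the four room sets are disjoint in `R` bounds `b_F + b_M` as claimed.
-/

open Finset

theorem Finset.card_add_card_le_of_disjoint {α : Type*} {s t u : Finset α}
    (hs : s ⊆ u) (ht : t ⊆ u) (h : Disjoint s t) : #s + #t ≤ #u := by
  classical
  exact card_union_of_disjoint h ▸ card_le_card (union_subset hs ht)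

/-- If `p = 0` and `n` is odd, then `b = 0` and `n ≤ 2a` forces `n + 1 ≤ 2a`; otherwise the
rounding of `⌈(n - p)/2⌉` is paid for by the `min` term. -/
theorem alone_add_privates_le_two_mul_rooms {n p a b : ℕ} (hp : p ≤ n) (hn : n ≤ 2 * a + b)
    (hb : b ≤ p) : b + p + 2 * ((n - p + 1) / 2) ≤ 2 * (a + b) + min ((n - p) % 2) p := by
  omega

theorem ppp_upper_bound_general {ι : Type*} (R : Finset ι) (F Fs M Ms : ℕ)
    (hF : Fs ≤ F) (hM : Ms ≤ M) :
    ∀ SF SFs SM SMs : Finset ι,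
      SF ⊆ R → SFs ⊆ R → SM ⊆ R → SMs ⊆ R →
      Disjoint SF SFs → Disjoint SF SM → Disjoint SF SMs →
      Disjoint SFs SM → Disjoint SFs SMs → Disjoint SM SMs →
      F ≤ 2 * SF.card + SFs.card → SFs.card ≤ Fs →
      M ≤ 2 * SM.card + SMs.card → SMs.card ≤ Ms →
      SFs.card + SMs.card ≤
        2 * (R.card - (F - Fs + 1) / 2 - (M - Ms + 1) / 2)
          + min ((F - Fs) % 2) Fs + min ((M - Ms) % 2) Ms - (Fs + Ms) := by
  classical
  intro SF SFs SM SMs hSF hSFs hSM hSMs hF_Fs hF_M hF_Ms hFs_M hFs_Ms hM_Ms hFcov hFs_le hMcov hMs_le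
  have hrooms : #SF + #SFs + (#SM + #SMs) ≤ #R := by
    rw [← card_union_of_disjoint hF_Fs, ← card_union_of_disjoint hM_Ms]
    exact card_add_card_le_of_disjoint (union_subset hSF hSFs) (union_subset hSM hSMs)
      (disjoint_union_left.2 ⟨disjoint_union_right.2 ⟨hF_M, hF_Ms⟩,
        disjoint_union_right.2 ⟨hFs_M, hFs_Ms⟩⟩)
  have hfemale := alone_add_privates_le_two_mul_rooms hF hFcov hFs_le
  have hmale := alone_add_privates_le_two_mul_rooms hM hMcov hMs_le
  omega

theorem ppp_upper_bound {ι : Type*} (R : Finset ι) (F Fs M Ms : ℕ)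
    (hF : Fs ≤ F) (hM : Ms ≤ M)
    (hfeas : (F + 1) / 2 + (M + 1) / 2 ≤ R.card)
    (hα : R.card - (F - Fs + 1) / 2 - (M - Ms + 1) / 2 < Fs + Ms) :
    ∀ SF SFs SM SMs : Finset ι,
      SF ⊆ R → SFs ⊆ R → SM ⊆ R → SMs ⊆ R →
      Disjoint SF SFs → Disjoint SF SM → Disjoint SF SMs →
      Disjoint SFs SM → Disjoint SFs SMs → Disjoint SM SMs →
      F ≤ 2 * SF.card + SFs.card → SFs.card ≤ Fs →
      M ≤ 2 * SM.card + SMs.card → SMs.card ≤ Ms →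
      SFs.card + SMs.card ≤
        2 * (R.card - (F - Fs + 1) / 2 - (M - Ms + 1) / 2)
          + min ((F - Fs) % 2) Fs + min ((M - Ms) % 2) Ms - (Fs + Ms) :=
  ppp_upper_bound_general R F Fs M Ms hF hM
end

section
/- Let R consist of rooms with capacities c_r ∈ {2, 2c} (c ≥ 2) with R₂ ≥ c − 1 rooms of capacity 2. If F and M are both even and F + M ≤ Σ_{r∈R} c_r, then there exists S ⊆ R with Σ_{r∈S} c_r ≥ F and Σ_{r∈R\S} c_r ≥ M. (Proof via halving: the instance with capacities c_r/2 and patient counts F/2, M/2 has capacities in {1, c} with at least c − 1 single rooms and is feasible by the total-capacity criterion, and any feasible subset for the halved instance is feasible for the original.) -/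
theorem even_counts_feasible {ι : Type*} [DecidableEq ι]
    (R : Finset ι) (cap : ι → ℕ) (c : ℕ) (hc : 2 ≤ c)
    (hcap : ∀ r ∈ R, cap r = 2 ∨ cap r = 2 * c)
    (hR2 : c - 1 ≤ (R.filter fun r => cap r = 2).card)
    (F M : ℕ) (hF : Even F) (hM : Even M) (hFM : F + M ≤ ∑ r ∈ R, cap r) :
    ∃ S ⊆ R, F ≤ ∑ r ∈ S, cap r ∧ M ≤ ∑ r ∈ R \ S, cap r := by
  classical
  set T := R.filter (fun r => cap r = 2) with hTdef
  set B := R \ T with hBdef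
  have hTR : T ⊆ R := Finset.filter_subset _ _
  have hTcap : ∀ r ∈ T, cap r = 2 := fun r hr => (Finset.mem_filter.mp hr).2
  have hBcap : ∀ r ∈ B, cap r = 2 * c := by
    intro r hr
    rw [hBdef, Finset.mem_sdiff] at hr
    rcases hcap r hr.1 with h | h
    · exact absurd (Finset.mem_filter.mpr ⟨hr.1, h⟩) hr.2
    · exact h
  have hsumT : ∑ r ∈ T, cap r = 2 * T.card := by
    rw [Finset.sum_congr rfl hTcap, Finset.sum_const, smul_eq_mul, mul_comm]
  have hsumB : ∑ r ∈ B, cap r = 2 * (c * B.card) := by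
    rw [Finset.sum_congr rfl hBcap, Finset.sum_const, smul_eq_mul]
    ring
  have htotal : ∑ r ∈ R, cap r = 2 * T.card + 2 * (c * B.card) := by
    rw [← Finset.sum_sdiff hTR, ← hBdef, hsumT, hsumB]
    ring
  obtain ⟨f, hf⟩ := hF
  have hfle : f ≤ T.card + c * B.card := by omega
  -- find j ≤ |T|, k ≤ |B| with f = c*k + j
  have hkey : ∃ j k, j ≤ T.card ∧ k ≤ B.card ∧ f = c * k + j := by
    by_cases hft : f ≤ T.card
    · exact ⟨f, 0, hft, Nat.zero_le _, by simp⟩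
    · push_neg at hft
      have hc0 : 0 < c := by omega
      set q := (f - T.card - 1) / c with hq
      have hmod : c * q + (f - T.card - 1) % c = f - T.card - 1 :=
        Nat.div_add_mod _ _
      have hrlt : (f - T.card - 1) % c < c := Nat.mod_lt _ hc0
      have hcq1 : c * (q + 1) = c * q + c := by ring
      have hqK : q + 1 ≤ B.card := by
        have h1 : c * q < c * B.card := by omega
        have := Nat.lt_of_mul_lt_mul_left h1
        omega
      refine ⟨f - c * (q + 1), q + 1, by omega, hqK, by omega⟩
  obtain ⟨j, k, hj, hk, hfjk⟩ := hkey
  obtain ⟨T', hT'sub, hT'card⟩ := Finset.exists_subset_card_eq hj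
  obtain ⟨B', hB'sub, hB'card⟩ := Finset.exists_subset_card_eq hk
  have hdisj : Disjoint T' B' :=
    ((Finset.sdiff_disjoint (t := R) (s := T)).mono hB'sub hT'sub).symm
  have hsumT' : ∑ r ∈ T', cap r = 2 * j := by
    rw [Finset.sum_congr rfl (fun r hr => hTcap r (hT'sub hr)),
      Finset.sum_const, smul_eq_mul, hT'card, mul_comm]
  have hsumB' : ∑ r ∈ B', cap r = 2 * (c * k) := by
    rw [Finset.sum_congr rfl (fun r hr => hBcap r (hB'sub hr)),
      Finset.sum_const, smul_eq_mul, hB'card]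
    ring
  have hSsub : T' ∪ B' ⊆ R :=
    Finset.union_subset (hT'sub.trans hTR) (hB'sub.trans Finset.sdiff_subset)
  have hsumS : ∑ r ∈ T' ∪ B', cap r = F := by
    rw [Finset.sum_union hdisj, hsumT', hsumB']
    omega
  have hcompl : ∑ r ∈ R \ (T' ∪ B'), cap r + ∑ r ∈ T' ∪ B', cap r
      = ∑ r ∈ R, cap r := Finset.sum_sdiff hSsub
  exact ⟨T' ∪ B', hSsub, by omega, by omega⟩
end
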